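/- arXiv:1703.00405 — 2 statements merged into one kernel-verified Lean document; each statement's English description precedes it below -/
import Mathlib

section
/- Let A₀ be a Hurwitz stable Metzler matrix, E ∈ ℝ^{n×q}_{≥0}, C ∈ ℝ^{q×n}_{≥0}, F ∈ ℝ^{q×q}_{≥0}, and define G = −CA₀^{-1}E + F. Then the following are equivalent: (a) there exist λ ∈ ℝ^n_{>0} and a diagonal D ≻ 0 such that λᵀA₀ + 𝟙ᵀDC < 0 and λᵀE + 𝟙ᵀD(F − I) < 0 componentwise; (b) there exists diagonal D ≻ 0 with ‖DGD^{-1}‖₁ < 1. -/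
open Matrix

def IsMetzler {n : ℕ} (A : Matrix (Fin n) (Fin n) ℝ) : Prop :=
  ∀ i j : Fin n, i ≠ j → 0 ≤ A i j

def IsHurwitz {n : ℕ} (A : Matrix (Fin n) (Fin n) ℝ) : Prop :=
  ∀ μ ∈ spectrum ℂ (A.map (fun x => (x : ℂ))), μ.re < 0

/-- Induced matrix 1-norm : maximum absolute column sum. -/
noncomputable def norm1 {a b : ℕ} (M : Matrix (Fin a) (Fin b) ℝ) : ℝ :=
  sSup {s | ∃ j : Fin b, s = ∑ i, |M i j|}



section Aux

attribute [local instance] Matrix.linftyOpNormedRing Matrix.linftyOpNormedAlgebra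
  Matrix.linftyOpNormedSpace

variable {n : ℕ}

private def entryLM (i j : Fin n) : Matrix (Fin n) (Fin n) ℝ →ₗ[ℝ] ℝ where
  toFun M := M i j
  map_add' _ _ := rfl
  map_smul' _ _ := rfl

private lemma entry_continuous (i j : Fin n) :
    Continuous (fun M : Matrix (Fin n) (Fin n) ℝ => M i j) :=
  (entryLM i j).continuous_of_finiteDimensional

private lemma pow_entry_nonneg {x : Matrix (Fin n) (Fin n) ℝ} (hx : ∀ i j, 0 ≤ x i j) :
    ∀ (k : ℕ) (i j : Fin n), 0 ≤ (x ^ k) i j := by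
  intro k
  induction k with
  | zero =>
    intro i j
    rw [pow_zero]
    by_cases h : i = j <;> simp [Matrix.one_apply, h]
  | succ m ih =>
    intro i j
    rw [pow_succ, Matrix.mul_apply]
    exact Finset.sum_nonneg fun k _ => mul_nonneg (ih i k) (hx k j)

private lemma inv_one_sub_nonneg {x : Matrix (Fin n) (Fin n) ℝ}
    (hx : ∀ i j, 0 ≤ x i j) (hn : ‖x‖ < 1) :
    ∀ i j, 0 ≤ (1 - x)⁻¹ i j := by
  have hs : HasSum (fun k : ℕ => x ^ k) (Ring.inverse (1 - x)) :=
    hasSum_geom_series_inverse x hn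
  intro i j
  have h2 : HasSum (fun k : ℕ => (x ^ k) i j) ((Ring.inverse (1 - x)) i j) :=
    hs.map (entryLM i j).toAddMonoidHom (entry_continuous i j)
  rw [Matrix.nonsing_inv_eq_ringInverse]
  exact h2.nonneg fun k => pow_entry_nonneg hx k i j

end Aux

section Aux2

attribute [local instance] Matrix.linftyOpNormedRing Matrix.linftyOpNormedAlgebra
  Matrix.linftyOpNormedSpace

variable {n : ℕ}

private lemma resolvent_nonneg (B : Matrix (Fin n) (Fin n) ℝ) (hB : ∀ i j, 0 ≤ B i j)
    (s : ℝ) (hdet : ∀ t : ℝ, s ≤ t → (t • (1 : Matrix (Fin n) (Fin n) ℝ) - B).det ≠ 0) :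
    ∀ i j, 0 ≤ (s • (1 : Matrix (Fin n) (Fin n) ℝ) - B)⁻¹ i j := by
  set g : ℝ → Matrix (Fin n) (Fin n) ℝ := fun t => t • (1 : Matrix (Fin n) (Fin n) ℝ) - B with hgdef
  have hunit : ∀ t : ℝ, s ≤ t → IsUnit (g t).det := fun t ht =>
    isUnit_iff_ne_zero.mpr (hdet t ht)
  have hg : Continuous g := by
    apply Continuous.sub _ continuous_const
    exact continuous_id.smul continuous_const
  have hmulinv : ∀ t : ℝ, s ≤ t → g t * (g t)⁻¹ = 1 := fun t ht =>
    Matrix.mul_nonsing_inv _ (hunit t ht)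
  -- large t
  have hlarge : ∀ i j, 0 ≤ (g (max s (‖B‖ + 1)))⁻¹ i j := by
    set t := max s (‖B‖ + 1) with htdef
    have htB : ‖B‖ + 1 ≤ t := le_max_right _ _
    have ht0 : 0 < t := lt_of_lt_of_le (by positivity) htB
    set x : Matrix (Fin n) (Fin n) ℝ := t⁻¹ • B with hxdef
    have hxn : ‖x‖ < 1 := by
      rw [hxdef, norm_smul, Real.norm_eq_abs, abs_of_pos (inv_pos.mpr ht0)]
      rw [inv_mul_lt_iff₀ ht0, mul_one]
      linarith
    have hxpos : ∀ i j, 0 ≤ x i j := fun i j => by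
      rw [hxdef, Matrix.smul_apply, smul_eq_mul]
      exact mul_nonneg (le_of_lt (inv_pos.mpr ht0)) (hB i j)
    have hxu : IsUnit (1 - x) := isUnit_one_sub_of_norm_lt_one hxn
    have hxinv : (1 - x) * (1 - x)⁻¹ = 1 :=
      Matrix.mul_nonsing_inv _ ((Matrix.isUnit_iff_isUnit_det _).mp hxu)
    have hfact : g t = t • (1 - x) := by
      rw [hgdef, hxdef, smul_sub, smul_smul, mul_inv_cancel₀ (ne_of_gt ht0), one_smul]
    have hform : (g t)⁻¹ = t⁻¹ • (1 - x)⁻¹ := by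
      apply Matrix.inv_eq_right_inv
      rw [hfact, Matrix.smul_mul, Matrix.mul_smul, smul_smul,
        mul_inv_cancel₀ (ne_of_gt ht0), one_smul, hxinv]
    intro i j
    rw [hform, Matrix.smul_apply, smul_eq_mul]
    exact mul_nonneg (le_of_lt (inv_pos.mpr ht0)) (inv_one_sub_nonneg hxpos hxn i j)
  -- step down
  have hstep : ∀ t : ℝ, s ≤ t → (∀ i j, 0 ≤ (g t)⁻¹ i j) → ∀ ε : ℝ, 0 ≤ ε →
      ε * ‖(g t)⁻¹‖ < 1 → ∀ i j, 0 ≤ (g (t - ε))⁻¹ i j := by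
    intro t ht hM ε hε hεn
    set M := (g t)⁻¹ with hMdef
    have hεM : ‖ε • M‖ < 1 := by
      rw [norm_smul, Real.norm_eq_abs, abs_of_nonneg hε]; exact hεn
    have hεMpos : ∀ i j, 0 ≤ (ε • M) i j := fun i j => by
      rw [Matrix.smul_apply, smul_eq_mul]
      exact mul_nonneg hε (hM i j)
    have hNpos : ∀ i j, 0 ≤ (1 - ε • M)⁻¹ i j := inv_one_sub_nonneg hεMpos hεM
    have hNu : (1 - ε • M) * (1 - ε • M)⁻¹ = 1 :=
      Matrix.mul_nonsing_inv _
        ((Matrix.isUnit_iff_isUnit_det _).mp (isUnit_one_sub_of_norm_lt_one hεM))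
    have hfact : g (t - ε) = g t * (1 - ε • M) := by
      rw [Matrix.mul_sub, Matrix.mul_smul, hMdef, hmulinv t ht, mul_one, hgdef]
      simp [sub_smul, sub_sub_eq_add_sub, smul_sub]
      abel
    have hform : (g (t - ε))⁻¹ = (1 - ε • M)⁻¹ * M := by
      apply Matrix.inv_eq_right_inv
      rw [hfact, Matrix.mul_assoc, ← Matrix.mul_assoc (1 - ε • M), hNu, Matrix.one_mul,
        hMdef, hmulinv t ht]
    intro i j
    rw [hform, Matrix.mul_apply]
    exact Finset.sum_nonneg fun k _ => mul_nonneg (hNpos i k) (hM k j)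
  -- infimum argument
  set S : Set ℝ := {t : ℝ | s ≤ t ∧ ∀ i j, 0 ≤ (g t)⁻¹ i j} with hSdef
  have hne : S.Nonempty := ⟨max s (‖B‖ + 1), le_max_left _ _, hlarge⟩
  have hbdd : BddBelow S := ⟨s, fun t ht => ht.1⟩
  set w := sInf S with hwdef
  have hws : s ≤ w := le_csInf hne fun t ht => ht.1
  have hwmem : ∀ i j, 0 ≤ (g w)⁻¹ i j := by
    obtain ⟨u, -, hu2, hu3⟩ := exists_seq_tendsto_sInf hne hbdd
    have hcont : ContinuousAt (fun t => (g t)⁻¹) w := by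
      simp only [Matrix.nonsing_inv_eq_ringInverse]
      have h1 : ContinuousAt Ring.inverse (g w) := by
        have hu : IsUnit (g w) := (Matrix.isUnit_iff_isUnit_det _).mpr (hunit w hws)
        have := NormedRing.inverse_continuousAt hu.unit
        rwa [hu.unit_spec] at this
      exact h1.comp hg.continuousAt
    intro i j
    have htend : Filter.Tendsto (fun k => (g (u k))⁻¹ i j) Filter.atTop
        (nhds ((g w)⁻¹ i j)) :=
      ((entry_continuous i j).continuousAt.tendsto.comp (hcont.tendsto.comp hu2))
    exact ge_of_tendsto' htend fun k => (hu3 k).2 i j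
  have hwle : w ≤ s := by
    by_contra h
    push_neg at h
    set ε := min (w - s) (1 / (‖(g w)⁻¹‖ + 1)) with hεdef
    have hnorm0 : (0:ℝ) < ‖(g w)⁻¹‖ + 1 := by positivity
    have hε0 : 0 < ε := lt_min (by linarith) (by positivity)
    have hε1 : ε * ‖(g w)⁻¹‖ < 1 := by
      have h1 : ε ≤ 1 / (‖(g w)⁻¹‖ + 1) := min_le_right _ _
      have h2 : ε * ‖(g w)⁻¹‖ ≤ (1 / (‖(g w)⁻¹‖ + 1)) * ‖(g w)⁻¹‖ :=
        mul_le_mul_of_nonneg_right h1 (norm_nonneg _)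
      have h3 : (1 / (‖(g w)⁻¹‖ + 1)) * ‖(g w)⁻¹‖ < 1 := by
        rw [div_mul_eq_mul_div, one_mul, div_lt_one hnorm0]
        linarith
      linarith
    have hmemS : w - ε ∈ S := by
      refine ⟨?_, hstep w hws hwmem ε (le_of_lt hε0) hε1⟩
      have : ε ≤ w - s := min_le_left _ _
      linarith
    have := csInf_le hbdd hmemS
    rw [← hwdef] at this
    linarith
  have : w = s := le_antisymm hwle hws
  rw [this] at hwmem
  exact hwmem

end Aux2

lemma metzler_hurwitz_key {n : ℕ} (A : Matrix (Fin n) (Fin n) ℝ)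
    (hm : IsMetzler A) (hh : IsHurwitz A) :
    IsUnit A.det ∧ ∀ i j, 0 ≤ (-A)⁻¹ i j := by
  set s : ℝ := 1 + ∑ i, |A i i| with hsdef
  set B : Matrix (Fin n) (Fin n) ℝ := A + s • (1 : Matrix (Fin n) (Fin n) ℝ) with hBdef
  have hB : ∀ i j, 0 ≤ B i j := by
    intro i j
    rw [hBdef, Matrix.add_apply, Matrix.smul_apply, Matrix.one_apply]
    by_cases h : i = j
    · simp only [h, if_true, smul_eq_mul, mul_one]
      have h1 : |A j j| ≤ ∑ k, |A k k| :=
        Finset.single_le_sum (fun k _ => abs_nonneg (A k k)) (Finset.mem_univ j)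
      have h2 : -A j j ≤ |A j j| := neg_le_abs _
      rw [hsdef]; linarith
    · simp only [h, if_false, smul_eq_mul, mul_zero, add_zero]
      exact hm i j h
  have hkey : ∀ t : ℝ, s ≤ t →
      t • (1 : Matrix (Fin n) (Fin n) ℝ) - B = (t - s) • 1 - A := by
    intro t ht
    rw [hBdef, sub_smul]
    abel
  have hdet : ∀ t : ℝ, s ≤ t → (t • (1 : Matrix (Fin n) (Fin n) ℝ) - B).det ≠ 0 := by
    intro t ht hzero
    rw [hkey t ht] at hzero
    set r : ℝ := t - s with hrdef
    have hr : 0 ≤ r := by rw [hrdef]; linarith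
    have hmap : ((r • (1 : Matrix (Fin n) (Fin n) ℝ) - A).map (fun x => (x:ℂ)))
        = (r : ℂ) • (1 : Matrix (Fin n) (Fin n) ℂ) - A.map (fun x => (x:ℂ)) := by
      ext i j
      simp only [Matrix.map_apply, Matrix.sub_apply, Matrix.smul_apply, Matrix.one_apply,
        smul_eq_mul]
      by_cases h : i = j <;> simp [h]
    have hdetC : ((r : ℂ) • (1 : Matrix (Fin n) (Fin n) ℂ) - A.map (fun x => (x:ℂ))).det = 0 := by
      rw [← hmap]
      have h3 := (RingHom.map_det Complex.ofRealHom
        (r • (1 : Matrix (Fin n) (Fin n) ℝ) - A)).symm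
      rw [RingHom.mapMatrix_apply] at h3
      rw [hzero, map_zero] at h3
      exact h3
    have hspec : (r : ℂ) ∈ spectrum ℂ (A.map (fun x => (x:ℂ))) := by
      rw [spectrum.mem_iff]
      rw [Algebra.algebraMap_eq_smul_one]
      intro hu
      have := (Matrix.isUnit_iff_isUnit_det _).mp hu
      rw [hdetC] at this
      exact (not_isUnit_zero : ¬ IsUnit (0:ℂ)) this
    have := hh _ hspec
    rw [Complex.ofReal_re] at this
    linarith
  have hres := resolvent_nonneg B hB s hdet
  have hsB : s • (1 : Matrix (Fin n) (Fin n) ℝ) - B = -A := by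
    rw [hBdef]; abel
  rw [hsB] at hres
  refine ⟨?_, hres⟩
  have hnz : (-A).det ≠ 0 := by
    have := hdet s le_rfl
    rwa [hsB] at this
  rw [Matrix.det_neg] at hnz
  exact isUnit_iff_ne_zero.mpr fun h => hnz (by rw [h, mul_zero])

lemma vecMul_apply' {m k : ℕ} (v : Fin m → ℝ) (M : Matrix (Fin m) (Fin k) ℝ) (j : Fin k) :
    Matrix.vecMul v M j = ∑ i, v i * M i j := rfl

lemma vecMul_mono {m k : ℕ} {x y : Fin m → ℝ} (M : Matrix (Fin m) (Fin k) ℝ)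
    (hM : ∀ i j, 0 ≤ M i j) (h : ∀ i, x i ≤ y i) (j : Fin k) :
    Matrix.vecMul x M j ≤ Matrix.vecMul y M j := by
  rw [vecMul_apply', vecMul_apply']
  exact Finset.sum_le_sum fun i _ => mul_le_mul_of_nonneg_right (h i) (hM i j)

lemma vecMul_nonneg {m k : ℕ} {x : Fin m → ℝ} (M : Matrix (Fin m) (Fin k) ℝ)
    (hM : ∀ i j, 0 ≤ M i j) (hx : ∀ i, 0 ≤ x i) (j : Fin k) :
    0 ≤ Matrix.vecMul x M j := by
  rw [vecMul_apply']
  exact Finset.sum_nonneg fun i _ => mul_nonneg (hx i) (hM i j)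

lemma norm1_lt_one_iff {a b : ℕ} (M : Matrix (Fin a) (Fin b) ℝ) :
    norm1 M < 1 ↔ ∀ j, ∑ i, |M i j| < 1 := by
  have hset : {s | ∃ j : Fin b, s = ∑ i, |M i j|}
      = Set.range (fun j : Fin b => ∑ i, |M i j|) := by
    ext x
    simp only [Set.mem_setOf_eq, Set.mem_range]
    exact ⟨fun ⟨j, hj⟩ => ⟨j, hj.symm⟩, fun ⟨j, hj⟩ => ⟨j, hj.symm⟩⟩
  rcases isEmpty_or_nonempty (Fin b) with h | h
  · constructor
    · intro _ j; exact (h.false j).elim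
    · intro _
      rw [norm1, hset, Set.range_eq_empty, Real.sSup_empty]
      norm_num
  · have hfin : (Set.range (fun j : Fin b => ∑ i, |M i j|)).Finite := Set.finite_range _
    have hne : (Set.range (fun j : Fin b => ∑ i, |M i j|)).Nonempty := Set.range_nonempty _
    constructor
    · intro hlt j
      refine lt_of_le_of_lt (le_csSup hfin.bddAbove ⟨j, rfl⟩) ?_
      rwa [norm1, hset] at hlt
    · intro hcol
      rw [norm1, hset]
      obtain ⟨j, hj⟩ := hne.csSup_mem hfin
      rw [← hj]
      exact hcol j

lemma bridge {q : ℕ} (G : Matrix (Fin q) (Fin q) ℝ) (hG : ∀ i j, 0 ≤ G i j)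
    (d : Fin q → ℝ) (hd : ∀ i, 0 < d i) :
    norm1 (Matrix.diagonal d * G * Matrix.diagonal (fun i => (d i)⁻¹)) < 1 ↔
      ∀ j, Matrix.vecMul d G j < d j := by
  rw [norm1_lt_one_iff]
  refine forall_congr' fun j => ?_
  have hcol : ∑ i, |(Matrix.diagonal d * G * Matrix.diagonal (fun i => (d i)⁻¹)) i j|
      = (∑ i, d i * G i j) * (d j)⁻¹ := by
    rw [Finset.sum_mul]
    refine Finset.sum_congr rfl fun i _ => ?_
    rw [Matrix.mul_diagonal, Matrix.diagonal_mul]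
    rw [abs_of_nonneg (mul_nonneg (mul_nonneg (hd i).le (hG i j)) (inv_nonneg.mpr (hd j).le))]
  rw [hcol, ← div_eq_mul_inv, div_lt_one (hd j), vecMul_apply']


theorem stmt16 {n q : ℕ} (A₀ : Matrix (Fin n) (Fin n) ℝ)
    (E : Matrix (Fin n) (Fin q) ℝ) (C : Matrix (Fin q) (Fin n) ℝ)
    (F : Matrix (Fin q) (Fin q) ℝ)
    (hA₀ : IsMetzler A₀) (hA₀s : IsHurwitz A₀)
    (hE : ∀ i j, 0 ≤ E i j) (hC : ∀ i j, 0 ≤ C i j) (hF : ∀ i j, 0 ≤ F i j) :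
    (∃ (lam : Fin n → ℝ) (d : Fin q → ℝ), (∀ i, 0 < lam i) ∧ (∀ i, 0 < d i) ∧
        (∀ j, Matrix.vecMul lam A₀ j + Matrix.vecMul d C j < 0) ∧
        (∀ j, Matrix.vecMul lam E j + Matrix.vecMul d (F - 1) j < 0)) ↔
      ∃ d : Fin q → ℝ, (∀ i, 0 < d i) ∧
        norm1 (Matrix.diagonal d * (-(C * A₀⁻¹ * E) + F) *
          Matrix.diagonal (fun i => (d i)⁻¹)) < 1 := by
  obtain ⟨hdetA, hAinv⟩ := metzler_hurwitz_key A₀ hA₀ hA₀s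
  set Ainv : Matrix (Fin n) (Fin n) ℝ := (-A₀)⁻¹ with hAinvdef
  have hdetneg : IsUnit (-A₀).det := by
    rw [Matrix.det_neg, Fintype.card_fin]
    exact ((isUnit_one.neg).pow n).mul hdetA
  have hmul1 : (-A₀) * Ainv = 1 := Matrix.mul_nonsing_inv _ hdetneg
  have hmul2 : Ainv * (-A₀) = 1 := Matrix.nonsing_inv_mul _ hdetneg
  have hinv_eq : A₀⁻¹ = -Ainv := by
    apply Matrix.inv_eq_right_inv
    rw [mul_neg, ← neg_mul, hmul1]
  have hAmulAinv : A₀ * Ainv = -1 := by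
    rw [← neg_neg (A₀ * Ainv), ← neg_mul, hmul1]
  have hAinvmulA : Ainv * A₀ = -1 := by
    rw [← neg_neg (Ainv * A₀), ← mul_neg, hmul2]
  have hGform : -(C * A₀⁻¹ * E) + F = C * Ainv * E + F := by
    rw [hinv_eq]
    simp [Matrix.mul_neg, Matrix.neg_mul]
  set G : Matrix (Fin q) (Fin q) ℝ := C * Ainv * E + F with hGdef
  have hGnonneg : ∀ i j, 0 ≤ G i j := by
    intro i j
    rw [hGdef, Matrix.add_apply]
    refine add_nonneg ?_ (hF i j)
    rw [Matrix.mul_apply]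
    refine Finset.sum_nonneg fun k _ => mul_nonneg ?_ (hE k j)
    rw [Matrix.mul_apply]
    exact Finset.sum_nonneg fun l _ => mul_nonneg (hC i l) (hAinv l k)
  rw [hGform]
  constructor
  · rintro ⟨lam, d, hlam, hd, h1, h2⟩
    refine ⟨d, hd, (bridge G hGnonneg d hd).mpr ?_⟩
    intro j
    have hcle : ∀ i, Matrix.vecMul d C i ≤ (-(Matrix.vecMul lam A₀)) i := by
      intro i
      have := h1 i
      rw [Pi.neg_apply]
      linarith
    have step1 : ∀ i, Matrix.vecMul (Matrix.vecMul d C) Ainv i ≤ lam i := by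
      intro i
      refine le_trans (vecMul_mono Ainv hAinv hcle i) (le_of_eq ?_)
      rw [Matrix.neg_vecMul, Matrix.vecMul_vecMul, hAmulAinv,
        Matrix.vecMul_neg, Matrix.vecMul_one, neg_neg]
    have step2 : Matrix.vecMul (Matrix.vecMul (Matrix.vecMul d C) Ainv) E j ≤
        Matrix.vecMul lam E j := vecMul_mono E hE step1 j
    have hlhs : Matrix.vecMul (Matrix.vecMul (Matrix.vecMul d C) Ainv) E j =
        Matrix.vecMul d (C * Ainv * E) j := by
      rw [Matrix.vecMul_vecMul, Matrix.vecMul_vecMul, Matrix.mul_assoc]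
    have h2' : Matrix.vecMul lam E j + Matrix.vecMul d F j < d j := by
      have := h2 j
      rw [Matrix.vecMul_sub, Matrix.vecMul_one, Pi.sub_apply] at this
      linarith
    have : Matrix.vecMul d G j = Matrix.vecMul d (C * Ainv * E) j + Matrix.vecMul d F j := by
      rw [hGdef, Matrix.vecMul_add, Pi.add_apply]
    rw [this, ← hlhs]
    linarith
  · rintro ⟨d, hd, hn⟩
    have hG : ∀ j, Matrix.vecMul d G j < d j := (bridge G hGnonneg d hd).mp hn
    -- positive vector μ with μᵀ A₀ = -1
    set μ : Fin n → ℝ := fun i => ∑ k, Ainv k i with hμdef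
    have hμpos : ∀ i, 0 < μ i := by
      intro i
      have hone : ∑ k, (-A₀) i k * Ainv k i = 1 := by
        have := congrFun (congrFun hmul1 i) i
        rwa [Matrix.mul_apply, Matrix.one_apply_eq] at this
      have hex : ∃ k, Ainv k i ≠ 0 := by
        by_contra hcon
        push_neg at hcon
        rw [Finset.sum_congr rfl (fun k _ => by rw [hcon k, mul_zero])] at hone
        simp at hone
      obtain ⟨k0, hk0⟩ := hex
      exact Finset.sum_pos' (fun k _ => hAinv k i)
        ⟨k0, Finset.mem_univ _, lt_of_le_of_ne (hAinv k0 i) (Ne.symm hk0)⟩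
    have hμ_eq : μ = Matrix.vecMul (fun _ => (1:ℝ)) Ainv := by
      funext i
      rw [vecMul_apply']
      exact Finset.sum_congr rfl fun k _ => (one_mul _).symm
    have hμA : ∀ j, Matrix.vecMul μ A₀ j = -1 := by
      intro j
      rw [hμ_eq, Matrix.vecMul_vecMul, hAinvmulA, Matrix.vecMul_neg, Matrix.vecMul_one,
        Pi.neg_apply]
    set ρ : Fin n → ℝ := Matrix.vecMul (Matrix.vecMul d C) Ainv with hρdef
    have hρ : ∀ i, 0 ≤ ρ i := fun i =>
      vecMul_nonneg Ainv hAinv (fun k => vecMul_nonneg C hC (fun l => (hd l).le) k) i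
    have hμE : ∀ j, 0 ≤ Matrix.vecMul μ E j :=
      fun j => vecMul_nonneg E hE (fun i => (hμpos i).le) j
    obtain ⟨ε, hε0, hεlt⟩ : ∃ ε : ℝ, 0 < ε ∧
        ∀ j, ε * Matrix.vecMul μ E j < d j - Matrix.vecMul d G j := by
      rcases isEmpty_or_nonempty (Fin q) with h | h
      · exact ⟨1, one_pos, fun j => (h.false j).elim⟩
      · set δ := Finset.univ.inf' Finset.univ_nonempty
          (fun j => d j - Matrix.vecMul d G j) with hδdef
        set K := Finset.univ.sup' Finset.univ_nonempty
          (fun j => Matrix.vecMul μ E j) with hKdef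
        have hδ : 0 < δ := by
          rw [hδdef, Finset.lt_inf'_iff]
          intro j _
          have := hG j
          linarith
        have hK0 : 0 ≤ K := le_trans (hμE (Classical.arbitrary _))
          (Finset.le_sup' _ (Finset.mem_univ _))
        refine ⟨δ / (K + 1), by positivity, fun j => ?_⟩
        have h1 : Matrix.vecMul μ E j ≤ K := Finset.le_sup' _ (Finset.mem_univ j)
        have h2 : δ / (K + 1) * Matrix.vecMul μ E j ≤ δ / (K + 1) * K :=
          mul_le_mul_of_nonneg_left h1 (by positivity)
        have h3 : δ / (K + 1) * K < δ := by
          rw [div_mul_eq_mul_div, div_lt_iff₀ (by positivity)]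
          nlinarith
        have h4 : δ ≤ d j - Matrix.vecMul d G j := Finset.inf'_le _ (Finset.mem_univ j)
        linarith
    refine ⟨fun i => ρ i + ε * μ i, d, ?_, hd, ?_, ?_⟩
    · intro i
      exact add_pos_of_nonneg_of_pos (hρ i) (mul_pos hε0 (hμpos i))
    · intro j
      have hlam_eq : (fun i => ρ i + ε * μ i) = ρ + ε • μ := rfl
      rw [hlam_eq, Matrix.add_vecMul, Matrix.smul_vecMul, Pi.add_apply, Pi.smul_apply,
        smul_eq_mul, hμA j, hρdef, Matrix.vecMul_vecMul, hAinvmulA, Matrix.vecMul_neg,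
        Matrix.vecMul_one, Pi.neg_apply]
      linarith
    · intro j
      have hlam_eq : (fun i => ρ i + ε * μ i) = ρ + ε • μ := rfl
      have hρE : Matrix.vecMul ρ E j = Matrix.vecMul d (C * Ainv * E) j := by
        rw [hρdef, Matrix.vecMul_vecMul, Matrix.vecMul_vecMul, Matrix.mul_assoc]
      have hdG : Matrix.vecMul d G j
          = Matrix.vecMul d (C * Ainv * E) j + Matrix.vecMul d F j := by
        rw [hGdef, Matrix.vecMul_add, Pi.add_apply]
      have hsub : Matrix.vecMul d (F - 1) j = Matrix.vecMul d F j - d j := by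
        rw [Matrix.vecMul_sub, Matrix.vecMul_one, Pi.sub_apply]
      rw [hlam_eq, Matrix.add_vecMul, Matrix.smul_vecMul, Pi.add_apply, Pi.smul_apply,
        smul_eq_mul, hρE, hsub]
      have := hεlt j
      rw [hdG] at this
      linarith
end

section
/- Let A₀ be a Metzler matrix, E ∈ ℝ^{n×n_u}_{≥0}, C ∈ ℝ^{n_y×n}_{≥0}, F ∈ ℝ^{n_y×n_u}_{≥0}, and γ > 0. Then A₀ is Hurwitz stable and every entry of −CA₀^{-1}E + F has column sums less than γ (i.e., ‖−CA₀^{-1}E + F‖₁ < γ) if and only if there exists λ ∈ ℝ^n_{>0} such that λᵀA₀ + 𝟙_{n_y}ᵀC < 0 and λᵀE + 𝟙_{n_y}ᵀF < γ𝟙_{n_u}ᵀ componentwise. -/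
open Matrix Filter Topology
open scoped ENNReal NNReal

lemma spec_iff_det {n : ℕ} (M : Matrix (Fin n) (Fin n) ℂ) (μ : ℂ) :
    μ ∈ spectrum ℂ M ↔ (μ • (1 : Matrix (Fin n) (Fin n) ℂ) - M).det = 0 := by
  rw [spectrum.mem_iff, Matrix.isUnit_iff_isUnit_det, isUnit_iff_ne_zero, not_not,
    Algebra.algebraMap_eq_smul_one]

lemma exists_left_eigvec {n : ℕ} {M : Matrix (Fin n) (Fin n) ℂ} {μ : ℂ}
    (h : μ ∈ spectrum ℂ M) : ∃ v : Fin n → ℂ, v ≠ 0 ∧ v ᵥ* M = μ • v := by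
  rw [spec_iff_det] at h
  have hdet : (μ • (1 : Matrix (Fin n) (Fin n) ℂ) - M)ᵀ.det = 0 := by
    rw [Matrix.det_transpose]; exact h
  obtain ⟨v, hv0, hv⟩ := (Matrix.exists_mulVec_eq_zero_iff).2 hdet
  refine ⟨v, hv0, ?_⟩
  have h2 : (μ • (1:Matrix (Fin n) (Fin n) ℂ) - M)ᵀ *ᵥ v = μ • v - v ᵥ* M := by
    rw [Matrix.transpose_sub, Matrix.transpose_smul, Matrix.transpose_one,
      Matrix.sub_mulVec, Matrix.smul_mulVec, Matrix.one_mulVec, Matrix.mulVec_transpose]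
  rw [h2] at hv
  exact (sub_eq_zero.mp hv).symm

lemma exists_right_eigvec {n : ℕ} {M : Matrix (Fin n) (Fin n) ℂ} {μ : ℂ}
    (h : μ ∈ spectrum ℂ M) : ∃ v : Fin n → ℂ, v ≠ 0 ∧ M *ᵥ v = μ • v := by
  rw [spec_iff_det] at h
  obtain ⟨v, hv0, hv⟩ := (Matrix.exists_mulVec_eq_zero_iff).2 h
  refine ⟨v, hv0, ?_⟩
  rw [Matrix.sub_mulVec, Matrix.smul_mulVec, Matrix.one_mulVec] at hv
  exact (sub_eq_zero.mp hv).symm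


lemma hurwitz_of_pos_vec {n : ℕ} {A : Matrix (Fin n) (Fin n) ℝ} (hA : IsMetzler A)
    {lam : Fin n → ℝ} (hlam : ∀ i, 0 < lam i) (h : ∀ j, (lam ᵥ* A) j < 0) :
    IsHurwitz A := by
  intro μ hμ
  obtain ⟨v, hv0, hv⟩ := exists_left_eigvec hμ
  obtain ⟨k, hk⟩ := Function.ne_iff.mp hv0
  obtain ⟨i, -, hi⟩ := Finset.exists_max_image Finset.univ
    (fun j => ‖v j‖ / lam j) ⟨k, Finset.mem_univ k⟩
  set c := ‖v i‖ / lam i with hc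
  have hcpos : 0 < c :=
    lt_of_lt_of_le (div_pos (norm_pos_iff.mpr hk) (hlam k)) (hi k (Finset.mem_univ k))
  have hvb : ∀ j, ‖v j‖ ≤ c * lam j := fun j =>
    (div_le_iff₀ (hlam j)).mp (hi j (Finset.mem_univ j))
  have hvi : ‖v i‖ = c * lam i := (div_mul_cancel₀ _ (hlam i).ne').symm
  have heq : ∑ j, v j * (A j i : ℂ) = μ * v i := by
    have := congrFun hv i
    simpa [Matrix.vecMul, dotProduct, Matrix.map_apply, Matrix.transpose_apply] using this
  have h1 := Finset.add_sum_erase Finset.univ (fun j => v j * (A j i : ℂ)) (Finset.mem_univ i)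
  have hsplit : (μ - (A i i : ℂ)) * v i = ∑ j ∈ Finset.univ.erase i, v j * (A j i : ℂ) := by
    linear_combination -h1 - heq
  have habs : ‖μ - (A i i : ℂ)‖ * (c * lam i)
      ≤ ∑ j ∈ Finset.univ.erase i, c * (lam j * A j i) := by
    rw [← hvi, ← norm_mul, hsplit]
    refine (norm_sum_le _ _).trans (Finset.sum_le_sum fun j hj => ?_)
    have hj' : j ≠ i := Finset.ne_of_mem_erase hj
    have hAj : 0 ≤ A j i := hA j i hj'
    rw [norm_mul, Complex.norm_real, Real.norm_eq_abs, abs_of_nonneg hAj]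
    calc ‖v j‖ * A j i ≤ (c * lam j) * A j i :=
          mul_le_mul_of_nonneg_right (hvb j) hAj
      _ = c * (lam j * A j i) := by ring
  have h2 := Finset.add_sum_erase Finset.univ (fun j => lam j * A j i) (Finset.mem_univ i)
  have hsum : ∑ j ∈ Finset.univ.erase i, lam j * A j i < -(lam i * A i i) := by
    have := h i
    simp only [Matrix.vecMul, dotProduct] at this
    have h2' : lam i * A i i + ∑ j ∈ Finset.univ.erase i, lam j * A j i
        = ∑ j : Fin n, lam j * A j i := by exact h2
    linarith
  have hstrict : ‖μ - (A i i : ℂ)‖ * (c * lam i) < c * -(lam i * A i i) := by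
    calc ‖μ - (A i i : ℂ)‖ * (c * lam i)
        ≤ ∑ j ∈ Finset.univ.erase i, c * (lam j * A j i) := habs
      _ = c * ∑ j ∈ Finset.univ.erase i, lam j * A j i := by rw [Finset.mul_sum]
      _ < c * -(lam i * A i i) := by
          exact mul_lt_mul_of_pos_left hsum hcpos
  have hfin : ‖μ - (A i i : ℂ)‖ < -(A i i) := by
    have hcl : 0 < c * lam i := mul_pos hcpos (hlam i)
    nlinarith [hcl]
  have hre : (μ - (A i i : ℂ)).re ≤ ‖μ - (A i i : ℂ)‖ := Complex.re_le_norm _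
  have : μ.re - A i i ≤ ‖μ - (A i i : ℂ)‖ := by
    simpa [Complex.sub_re, Complex.ofReal_re] using hre
  linarith

lemma eig_abs_le {n : ℕ} {A : Matrix (Fin n) (Fin n) ℝ} {μ : ℂ}
    (h : μ ∈ spectrum ℂ (A.map (fun x => (x : ℂ)))) :
    ‖μ‖ ≤ ∑ i, ∑ j, |A i j| := by
  obtain ⟨v, hv0, hv⟩ := exists_right_eigvec h
  obtain ⟨k, hk⟩ := Function.ne_iff.mp hv0
  obtain ⟨i, -, hi⟩ := Finset.exists_max_image Finset.univ
    (fun j => ‖v j‖) ⟨k, Finset.mem_univ k⟩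
  have hvi : 0 < ‖v i‖ :=
    lt_of_lt_of_le (norm_pos_iff.mpr hk) (hi k (Finset.mem_univ k))
  have heq : ∑ j, (A i j : ℂ) * v j = μ * v i := by
    have := congrFun hv i
    simpa [Matrix.mulVec, dotProduct, Matrix.map_apply] using this
  have hb : ‖μ‖ * ‖v i‖ ≤ (∑ j, |A i j|) * ‖v i‖ := by
    rw [← norm_mul, ← heq, Finset.sum_mul]
    refine (norm_sum_le _ _).trans (Finset.sum_le_sum fun j _ => ?_)
    rw [norm_mul, Complex.norm_real, Real.norm_eq_abs]
    exact mul_le_mul (le_refl _) (hi j (Finset.mem_univ j)) (norm_nonneg _) (abs_nonneg _)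
  have h1 : ‖μ‖ ≤ ∑ j, |A i j| := le_of_mul_le_mul_right hb hvi
  refine h1.trans (Finset.single_le_sum (f := fun i => ∑ j, |A i j|) (fun i _ => ?_) (Finset.mem_univ i))
  positivity

lemma hurwitz_isUnit_det {n : ℕ} {A : Matrix (Fin n) (Fin n) ℝ} (hH : IsHurwitz A) :
    IsUnit A.det := by
  rw [isUnit_iff_ne_zero]
  intro h0
  have hmapdet : (A.map (fun x => (x : ℂ))).det = (A.det : ℂ) := by
    have := (Complex.ofRealHom.map_det A).symm
    rw [RingHom.mapMatrix_apply] at this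
    exact this
  have hd : ((0:ℂ) • (1 : Matrix (Fin n) (Fin n) ℂ) - A.map (fun x => (x:ℂ))).det = 0 := by
    rw [zero_smul, zero_sub, Matrix.det_neg, hmapdet, h0]
    simp
  have h0s : (0:ℂ) ∈ spectrum ℂ (A.map fun x => (x:ℂ)) := (spec_iff_det _ _).2 hd
  simpa using hH 0 h0s

lemma exists_strict_bound {S : Set ℝ} (hfin : S.Finite) {s : ℝ} (hs : 0 < s)
    (h : ∀ x ∈ S, x < s) : ∃ r, 0 ≤ r ∧ r < s ∧ ∀ x ∈ S, x ≤ r := by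
  set T := insert (s/2) S with hT
  have hTfin : T.Finite := hfin.insert _
  have hTne : T.Nonempty := ⟨s/2, Set.mem_insert _ _⟩
  refine ⟨sSup T, ?_, ?_, ?_⟩
  · have := le_csSup hTfin.bddAbove (Set.mem_insert (s/2) S)
    linarith
  · have hmem := hTne.csSup_mem hTfin
    rcases hmem with h1 | h2
    · rw [h1]; linarith
    · exact h _ h2
  · exact fun x hx => le_csSup hTfin.bddAbove (Set.mem_insert_of_mem _ hx)


attribute [local instance] Matrix.linftyOpNormedRing Matrix.linftyOpNormedAlgebra

lemma entry_le_linfty {m : ℕ} (M : Matrix (Fin m) (Fin m) ℂ) (i : Fin m) (j : Fin m) :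
    ‖M i j‖ ≤ ‖M‖ := by
  have h1 : ‖M i j‖₊ ≤ ‖M‖₊ := by
    rw [Matrix.linfty_opNNNorm_def]
    exact le_trans
      (Finset.single_le_sum (f := fun j' => ‖M i j'‖₊) (fun _ _ => zero_le) (Finset.mem_univ j))
      (Finset.le_sup (f := fun i' => ∑ j' : Fin m, ‖M i' j'‖₊) (Finset.mem_univ i))
  calc ‖M i j‖ = ‖M i j‖ := rfl
    _ ≤ ‖M‖ := h1

set_option maxHeartbeats 1000000 in
lemma neg_inv_entry_nonneg {n : ℕ} {A : Matrix (Fin n) (Fin n) ℝ} (hA : IsMetzler A)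
    (hH : IsHurwitz A) : ∀ i j, 0 ≤ (-A⁻¹) i j := by
  classical
  have hdet : IsUnit A.det := hurwitz_isUnit_det hH
  set cA := A.map (fun x => (x : ℂ)) with hcA
  -- choose s
  have hσfin : (spectrum ℂ cA).Finite := Matrix.finite_spectrum cA
  set f : ℂ → ℝ := fun μ => (‖μ‖)^2 / (-2 * μ.re) with hf
  have hfin2 : ((f '' spectrum ℂ cA) ∪ (Set.range fun i : Fin n => -A i i)).Finite :=
    (hσfin.image f).union (Set.finite_range _)
  obtain ⟨b, hb⟩ := hfin2.bddAbove
  set s : ℝ := max b 0 + 1 with hs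
  have hspos : 0 < s := by
    have : (0:ℝ) ≤ max b 0 := le_max_right _ _
    linarith
  have hdiag : ∀ i, -A i i < s := fun i => by
    have : -A i i ≤ b := hb (Set.mem_union_right _ ⟨i, rfl⟩)
    have h2 : b ≤ max b 0 := le_max_left _ _
    linarith
  have hfs : ∀ μ ∈ spectrum ℂ cA, f μ < s := fun μ hμ => by
    have : f μ ≤ b := hb (Set.mem_union_left _ ⟨μ, hμ, rfl⟩)
    have h2 : b ≤ max b 0 := le_max_left _ _
    linarith
  -- ball property
  have hball : ∀ μ ∈ spectrum ℂ cA, ‖μ + s‖ < s := by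
    intro μ hμ
    have hre : μ.re < 0 := hH μ hμ
    have habs2 : (‖μ‖)^2 < s * (-2 * μ.re) := by
      have := hfs μ hμ
      rw [hf] at this
      have h2 : 0 < -2 * μ.re := by linarith
      calc (‖μ‖)^2 = (‖μ‖)^2 / (-2*μ.re) * (-2*μ.re) :=
            (div_mul_cancel₀ _ h2.ne').symm
        _ < s * (-2*μ.re) := mul_lt_mul_of_pos_right this h2
    have e1 : (‖μ + s‖)^2 = (μ.re + s)^2 + μ.im^2 := by
      rw [Complex.sq_norm, Complex.normSq_apply]
      simp [Complex.add_re, Complex.add_im]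
      ring
    have e2 : (‖μ‖)^2 = μ.re^2 + μ.im^2 := by
      rw [Complex.sq_norm, Complex.normSq_apply]; ring
    have hlt : (‖μ + s‖)^2 < s^2 := by nlinarith
    nlinarith [norm_nonneg (μ + ↑s)]
  -- the nonnegative matrix N
  set N : Matrix (Fin n) (Fin n) ℝ := A + s • 1 with hNdef
  have hN : ∀ i j, 0 ≤ N i j := by
    intro i j
    by_cases hij : i = j
    · subst hij
      have := hdiag i
      simp only [hNdef, Matrix.add_apply, Matrix.smul_apply, Matrix.one_apply_eq, smul_eq_mul,
        mul_one]
      linarith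
    · have := hA i j hij
      simp only [hNdef, Matrix.add_apply, Matrix.smul_apply, Matrix.one_apply_ne hij,
        smul_eq_mul, mul_zero, add_zero]
      linarith
  set cN := N.map (fun x => (x : ℂ)) with hcN
  have hcNeq : cN = algebraMap ℂ (Matrix (Fin n) (Fin n) ℂ) (s : ℂ) + cA := by
    ext i j
    by_cases hij : i = j <;>
      simp [hcN, hcA, hNdef, Matrix.map_apply, Matrix.add_apply, Matrix.smul_apply,
        Matrix.one_apply, Matrix.algebraMap_matrix_apply, hij] <;> push_cast <;> ring
  have hσNfin : (spectrum ℂ cN).Finite := Matrix.finite_spectrum cN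
  have hσN : ∀ ν ∈ spectrum ℂ cN, ‖ν‖ < s := by
    intro ν hν
    have hmem : ν - s + s ∈ spectrum ℂ (algebraMap ℂ (Matrix (Fin n) (Fin n) ℂ) (s:ℂ) + cA) := by
      rw [← hcNeq]; simpa using hν
    have h1 := (spectrum.add_mem_add_iff).mp hmem
    have h2 := hball _ h1
    simpa using h2
  obtain ⟨r, hr0, hrs, hrb⟩ := exists_strict_bound (hσNfin.image (fun z : ℂ => ‖z‖)) hspos
    (fun x hx => by obtain ⟨ν, hν, rfl⟩ := hx; exact hσN ν hν)
  have hsr : spectralRadius ℂ cN ≤ ENNReal.ofReal r := by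
    rw [spectralRadius]
    refine iSup₂_le fun ν hν => ?_
    have h1 : ‖ν‖ ≤ r := hrb _ ⟨ν, hν, rfl⟩
    rw [← enorm_eq_nnnorm, ← ofReal_norm]
    exact ENNReal.ofReal_le_ofReal (by simpa using h1)
  set r₂ : ℝ := (r + s)/2 with hr₂def
  have hr₂pos : 0 < r₂ := by simp only [hr₂def]; linarith
  have hrr₂ : r < r₂ := by simp only [hr₂def]; linarith
  have hr₂s : r₂ < s := by simp only [hr₂def]; linarith
  haveI : CompleteSpace (Matrix (Fin n) (Fin n) ℂ) := FiniteDimensional.complete ℂ _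
  have hgel := spectrum.pow_nnnorm_pow_one_div_tendsto_nhds_spectralRadius cN
  have hlt : spectralRadius ℂ cN < ENNReal.ofReal r₂ :=
    lt_of_le_of_lt hsr ((ENNReal.ofReal_lt_ofReal_iff hr₂pos).mpr hrr₂)
  have hev := hgel.eventually_lt_const hlt
  have hnorm_ev : ∀ᶠ k in atTop, ‖cN ^ k‖ ≤ r₂ ^ k := by
    filter_upwards [hev, eventually_ge_atTop 1] with k hk hk1
    set x : ℝ := ‖cN ^ k‖ with hx
    have hx0 : 0 ≤ x := norm_nonneg _
    have hcoe : (‖cN ^ k‖₊ : ℝ≥0∞) = ENNReal.ofReal x := ((ofReal_norm _).trans (enorm_eq_nnnorm _)).symm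
    rw [hcoe, ENNReal.ofReal_rpow_of_nonneg hx0 (by positivity)] at hk
    have hk' : x ^ (1/(k:ℝ)) < r₂ := by
      exact (ENNReal.ofReal_lt_ofReal_iff hr₂pos).mp hk
    have hkne : (k:ℝ) ≠ 0 := by positivity
    have hxeq : (x ^ (1/(k:ℝ))) ^ (k:ℕ) = x := by
      rw [← Real.rpow_natCast (x ^ (1/(k:ℝ))) k, ← Real.rpow_mul hx0, one_div_mul_cancel hkne,
        Real.rpow_one]
    calc x = (x ^ (1/(k:ℝ))) ^ (k:ℕ) := hxeq.symm
      _ ≤ r₂ ^ k := pow_le_pow_left₀ (Real.rpow_nonneg hx0 _) hk'.le k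
  -- relate real and complex powers
  have hmap_pow : ∀ k : ℕ, (N ^ k).map (fun x => (x:ℂ)) = cN ^ k := by
    intro k
    have h1 := map_pow (Complex.ofRealHom.mapMatrix) N k
    rw [RingHom.mapMatrix_apply, RingHom.mapMatrix_apply] at h1
    exact h1
  have hentry : ∀ (k : ℕ) i j, |(N ^ k) i j| ≤ ‖cN ^ k‖ := by
    intro k i j
    have h2 : (cN ^ k) i j = ((N ^ k) i j : ℂ) := by rw [← hmap_pow k]; rfl
    calc |(N ^ k) i j| = ‖(cN ^ k) i j‖ := by rw [h2, Complex.norm_real, Real.norm_eq_abs]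
      _ ≤ ‖cN ^ k‖ := entry_le_linfty _ i j
  have hNk : ∀ (k : ℕ) (i j : Fin n), 0 ≤ (N ^ k) i j := by
    intro k
    induction k with
    | zero =>
      intro i j
      by_cases h : i = j <;> simp [pow_zero, Matrix.one_apply, h]
    | succ k ih =>
      intro i j
      rw [pow_succ, Matrix.mul_apply]
      exact Finset.sum_nonneg fun l _ => mul_nonneg (ih i l) (hN l j)
  -- inverse of -A
  have hdetneg : IsUnit (-A).det := by
    rw [Matrix.det_neg, Fintype.card_fin]
    exact ((isUnit_one.neg).pow n).mul hdet
  set B := (-A)⁻¹ with hBdef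
  have hBl : B * (-A) = 1 := Matrix.nonsing_inv_mul _ hdetneg
  have hAeq : -A = s • (1 : Matrix (Fin n) (Fin n) ℝ) - N := by
    rw [hNdef]; abel
  have hsc : ∀ K : ℕ, (s^(K+1))⁻¹ * s = (s^K)⁻¹ := by
    intro K
    rw [pow_succ]
    field_simp
  have hPid : ∀ K, (-A) * (∑ k ∈ Finset.range K, (s^(k+1))⁻¹ • N ^ k)
      = 1 - (s^K)⁻¹ • N ^ K := by
    intro K
    induction K with
    | zero => simp
    | succ K ih =>
      have hmul : (-A) * ((s^(K+1))⁻¹ • N ^ K)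
          = (s^K)⁻¹ • N ^ K - (s^(K+1))⁻¹ • N^(K+1) := by
        rw [Matrix.mul_smul, hAeq, Matrix.sub_mul, Matrix.smul_mul, Matrix.one_mul, smul_sub,
          smul_smul, hsc K, ← pow_succ']
      rw [Finset.sum_range_succ, Matrix.mul_add, ih, hmul]
      abel
  have hPeq : ∀ K, (∑ k ∈ Finset.range K, (s^(k+1))⁻¹ • N ^ k)
      = B - (s^K)⁻¹ • (B * (N ^ K)) := by
    intro K
    have h1 : B * ((-A) * (∑ k ∈ Finset.range K, (s^(k+1))⁻¹ • N ^ k))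
        = ∑ k ∈ Finset.range K, (s^(k+1))⁻¹ • N ^ k := by
      rw [← Matrix.mul_assoc, hBl, Matrix.one_mul]
    rw [hPid K] at h1
    rw [← h1, Matrix.mul_sub, Matrix.mul_one, Matrix.mul_smul]
  have hPnn : ∀ K i j, 0 ≤ (∑ k ∈ Finset.range K, (s^(k+1))⁻¹ • N ^ k) i j := by
    intro K i j
    rw [Matrix.sum_apply]
    refine Finset.sum_nonneg fun k _ => ?_
    rw [Matrix.smul_apply, smul_eq_mul]
    exact mul_nonneg (inv_nonneg.mpr (pow_nonneg hspos.le _)) (hNk k i j)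
  intro i j
  set c₀ : ℝ := ∑ l, |B i l| with hc₀
  have hc₀0 : 0 ≤ c₀ := Finset.sum_nonneg fun l _ => abs_nonneg _
  have hBN : ∀ K : ℕ, |(B * (N ^ K)) i j| ≤ c₀ * ‖cN ^ K‖ := by
    intro K
    rw [Matrix.mul_apply]
    calc |∑ l, B i l * (N ^ K) l j| ≤ ∑ l, |B i l * (N ^ K) l j| :=
          Finset.abs_sum_le_sum_abs _ _
      _ ≤ ∑ l, |B i l| * ‖cN ^ K‖ := by
          refine Finset.sum_le_sum fun l _ => ?_
          rw [abs_mul]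
          exact mul_le_mul_of_nonneg_left (hentry K l j) (abs_nonneg _)
      _ = c₀ * ‖cN ^ K‖ := by rw [← Finset.sum_mul]
  have htend : Tendsto (fun K => (s^K)⁻¹ * (B * (N ^ K)) i j) atTop (𝓝 0) := by
    apply squeeze_zero_norm' (a := fun K => c₀ * (r₂/s)^K)
    · filter_upwards [hnorm_ev] with K hK
      have h1 : |(s^K)⁻¹ * (B * (N ^ K)) i j| = (s^K)⁻¹ * |(B * (N ^ K)) i j| := by
        rw [abs_mul, abs_of_nonneg (inv_nonneg.mpr (pow_nonneg hspos.le K))]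
      rw [Real.norm_eq_abs, h1]
      calc (s^K)⁻¹ * |(B * (N ^ K)) i j| ≤ (s^K)⁻¹ * (c₀ * ‖cN ^ K‖) :=
            mul_le_mul_of_nonneg_left (hBN K) (inv_nonneg.mpr (pow_nonneg hspos.le K))
        _ ≤ (s^K)⁻¹ * (c₀ * r₂^K) := by
            exact mul_le_mul_of_nonneg_left (mul_le_mul_of_nonneg_left hK hc₀0)
              (inv_nonneg.mpr (pow_nonneg hspos.le K))
        _ = c₀ * (r₂/s)^K := by
            have harr : ∀ (c x y : ℝ), y ≠ 0 → (y^K)⁻¹ * (c * x^K) = c * (x/y)^K := by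
              intro c x y hy
              rw [div_pow, div_eq_mul_inv]; ring
            exact harr c₀ r₂ s hspos.ne'
    · have hlt1 : r₂ / s < 1 := (div_lt_one hspos).mpr hr₂s
      have hge0 : 0 ≤ r₂ / s := div_nonneg hr₂pos.le hspos.le
      simpa using (tendsto_pow_atTop_nhds_zero_of_lt_one hge0 hlt1).const_mul c₀
  have hPtend : Tendsto (fun K => (∑ k ∈ Finset.range K, (s^(k+1))⁻¹ • N ^ k) i j)
      atTop (𝓝 (B i j)) := by
    have heq : ∀ K, (∑ k ∈ Finset.range K, (s^(k+1))⁻¹ • N ^ k) i j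
        = B i j - (s^K)⁻¹ * (B * (N ^ K)) i j := by
      intro K
      rw [hPeq K, Matrix.sub_apply, Matrix.smul_apply, smul_eq_mul]
    rw [funext heq]
    simpa using tendsto_const_nhds.sub htend
  have hBnn : 0 ≤ B i j := ge_of_tendsto' hPtend fun K => hPnn K i j
  have hinv : (-A)⁻¹ = -A⁻¹ := by
    apply Matrix.inv_eq_right_inv
    rw [Matrix.neg_mul, Matrix.mul_neg, neg_neg, Matrix.mul_nonsing_inv _ hdet]
  rw [← hinv]
  exact hBnn


lemma vecMul_one_apply {a b : ℕ} (M : Matrix (Fin a) (Fin b) ℝ) (j : Fin b) :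
    ((fun _ : Fin a => (1:ℝ)) ᵥ* M) j = ∑ i, M i j := by
  simp [Matrix.vecMul, dotProduct]

lemma mul_entry_nonneg {a b c : ℕ} {M : Matrix (Fin a) (Fin b) ℝ} {P : Matrix (Fin b) (Fin c) ℝ}
    (hM : ∀ i j, 0 ≤ M i j) (hP : ∀ i j, 0 ≤ P i j) : ∀ i j, 0 ≤ (M * P) i j := by
  intro i j
  rw [Matrix.mul_apply]
  exact Finset.sum_nonneg fun k _ => mul_nonneg (hM i k) (hP k j)

theorem stmt18 {n nu ny : ℕ} (A₀ : Matrix (Fin n) (Fin n) ℝ)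
    (E : Matrix (Fin n) (Fin nu) ℝ) (C : Matrix (Fin ny) (Fin n) ℝ)
    (F : Matrix (Fin ny) (Fin nu) ℝ) (γ : ℝ) (hγ : 0 < γ)
    (hA₀ : IsMetzler A₀)
    (hE : ∀ i j, 0 ≤ E i j) (hC : ∀ i j, 0 ≤ C i j) (hF : ∀ i j, 0 ≤ F i j) :
    (IsHurwitz A₀ ∧ norm1 (-(C * A₀⁻¹ * E) + F) < γ) ↔
      ∃ lam : Fin n → ℝ, (∀ i, 0 < lam i) ∧
        (∀ j, Matrix.vecMul lam A₀ j + Matrix.vecMul (fun _ : Fin ny => (1 : ℝ)) C j < 0) ∧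
        (∀ j, Matrix.vecMul lam E j + Matrix.vecMul (fun _ : Fin ny => (1 : ℝ)) F j < γ) := by
  have hG : ∀ (h : True), -(C * A₀⁻¹ * E) + F = C * (-A₀⁻¹) * E + F := fun _ => by
    rw [Matrix.mul_neg, Matrix.neg_mul]
  constructor
  · rintro ⟨hH, hnorm⟩
    have hdet : IsUnit A₀.det := hurwitz_isUnit_det hH
    have hBnn : ∀ i j, 0 ≤ (-A₀⁻¹) i j := neg_inv_entry_nonneg hA₀ hH
    set B : Matrix (Fin n) (Fin n) ℝ := -A₀⁻¹ with hBdef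
    have hBA : B * A₀ = -1 := by
      rw [hBdef, Matrix.neg_mul, Matrix.nonsing_inv_mul _ hdet]
    have hGBE : -(C * A₀⁻¹ * E) + F = C * B * E + F := hG trivial
    have hGnn : ∀ i j, 0 ≤ (C * B * E + F) i j := by
      intro i j
      rw [Matrix.add_apply]
      exact add_nonneg (mul_entry_nonneg (mul_entry_nonneg hC hBnn) hE i j) (hF i j)
    have hcol : ∀ j, ∑ i, (C * B * E + F) i j < γ := by
      intro j
      rw [hGBE] at hnorm
      have hmem : (∑ i, |(C * B * E + F) i j|) ∈
          {s | ∃ j' : Fin nu, s = ∑ i, |(C * B * E + F) i j'|} := ⟨j, rfl⟩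
      have hbdd : BddAbove {s | ∃ j' : Fin nu, s = ∑ i, |(C * B * E + F) i j'|} := by
        have : {s | ∃ j' : Fin nu, s = ∑ i, |(C * B * E + F) i j'|}
            = Set.range (fun j' => ∑ i, |(C * B * E + F) i j'|) := by
          ext x; simp [Set.mem_setOf_eq, eq_comm]
        rw [this]
        exact (Set.finite_range _).bddAbove
      have h1 : (∑ i, |(C * B * E + F) i j|) ≤ norm1 (C * B * E + F) :=
        le_csSup hbdd hmem
      have h2 : ∑ i, (C * B * E + F) i j = ∑ i, |(C * B * E + F) i j| :=
        Finset.sum_congr rfl fun i _ => (abs_of_nonneg (hGnn i j)).symm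
      rw [h2]
      exact lt_of_le_of_lt h1 hnorm
    -- choose ε
    have hev : ∀ᶠ ε in 𝓝[>] (0:ℝ),
        ∀ j, (∑ i, (C * B * E + F) i j) + ε * (∑ k, (B * E) k j) < γ := by
      rw [eventually_all]
      intro j
      have hc : Tendsto (fun ε : ℝ => (∑ i, (C * B * E + F) i j) + ε * (∑ k, (B * E) k j))
          (𝓝[>] 0) (𝓝 ((∑ i, (C * B * E + F) i j) + 0 * (∑ k, (B * E) k j))) := by
        apply Tendsto.mono_left _ nhdsWithin_le_nhds
        exact (continuous_const.add (continuous_id.mul continuous_const)).tendsto 0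
      refine hc.eventually_lt_const ?_
      simpa using hcol j
    obtain ⟨ε, hε, hεpos⟩ := (hev.and self_mem_nhdsWithin).exists
    set u : Fin n → ℝ := fun k => ((fun _ : Fin ny => (1:ℝ)) ᵥ* C) k + ε with hu
    have hupos : ∀ k, 0 < u k := by
      intro k
      have : 0 ≤ ((fun _ : Fin ny => (1:ℝ)) ᵥ* C) k := by
        rw [vecMul_one_apply]
        exact Finset.sum_nonneg fun i _ => hC i k
      simp only [hu]
      linarith
    refine ⟨u ᵥ* B, ?_, ?_, ?_⟩
    · -- positivity of lam
      intro i
      have hcolB : ∃ k, 0 < B k i := by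
        by_contra hcon
        push_neg at hcon
        have hz : ∀ k, B k i = 0 := fun k => le_antisymm (hcon k) (hBnn k i)
        have h1 : (A₀ * A₀⁻¹) i i = 1 := by
          rw [Matrix.mul_nonsing_inv _ hdet, Matrix.one_apply_eq]
        rw [Matrix.mul_apply] at h1
        have h2 : ∀ k, A₀⁻¹ k i = 0 := by
          intro k
          have := hz k
          rw [hBdef, Matrix.neg_apply, neg_eq_zero] at this
          exact this
        simp [h2] at h1
      obtain ⟨k0, hk0⟩ := hcolB
      have : (u ᵥ* B) i = ∑ k, u k * B k i := by
        simp [Matrix.vecMul, dotProduct]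
      rw [this]
      refine Finset.sum_pos' (fun k _ => mul_nonneg (hupos k).le (hBnn k i)) ?_
      exact ⟨k0, Finset.mem_univ k0, mul_pos (hupos k0) hk0⟩
    · -- LP constraint 1
      intro j
      rw [Matrix.vecMul_vecMul, hBA]
      have : (u ᵥ* (-1 : Matrix (Fin n) (Fin n) ℝ)) j = -(u j) := by
        rw [Matrix.vecMul_neg, Matrix.vecMul_one]
        rfl
      rw [this, hu]
      simp only
      linarith [hεpos]
    · -- LP constraint 2
      intro j
      rw [Matrix.vecMul_vecMul]
      have hsum : (u ᵥ* (B * E)) j = ∑ k, (((fun _ : Fin ny => (1:ℝ)) ᵥ* C) k) * (B * E) k j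
          + ε * (∑ k, (B * E) k j) := by
        simp only [Matrix.vecMul, dotProduct, hu]
        rw [Finset.mul_sum, ← Finset.sum_add_distrib]
        exact Finset.sum_congr rfl fun k _ => by ring
      have hsum2 : ∑ k, (((fun _ : Fin ny => (1:ℝ)) ᵥ* C) k) * (B * E) k j
          = ∑ i, (C * B * E) i j := by
        have h1 : ∑ k, (((fun _ : Fin ny => (1:ℝ)) ᵥ* C) k) * (B * E) k j
            = (((fun _ : Fin ny => (1:ℝ)) ᵥ* C) ᵥ* (B * E)) j := by
          simp [Matrix.vecMul, dotProduct]
        rw [h1, Matrix.vecMul_vecMul, ← Matrix.mul_assoc, vecMul_one_apply]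
      rw [hsum, hsum2, vecMul_one_apply]
      have hfin := hε j
      have hsplit : ∑ i, (C * B * E + F) i j = ∑ i, (C * B * E) i j + ∑ i, F i j := by
        rw [← Finset.sum_add_distrib]
        exact Finset.sum_congr rfl fun i _ => by rw [Matrix.add_apply]
      rw [hsplit] at hfin
      linarith
  · rintro ⟨lam, hpos, h2, h3⟩
    have h1C : ∀ k, 0 ≤ ((fun _ : Fin ny => (1:ℝ)) ᵥ* C) k := by
      intro k
      rw [vecMul_one_apply]
      exact Finset.sum_nonneg fun i _ => hC i k
    have hH : IsHurwitz A₀ := by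
      refine hurwitz_of_pos_vec hA₀ hpos fun j => ?_
      have := h2 j
      have := h1C j
      linarith
    refine ⟨hH, ?_⟩
    have hdet : IsUnit A₀.det := hurwitz_isUnit_det hH
    have hBnn : ∀ i j, 0 ≤ (-A₀⁻¹) i j := neg_inv_entry_nonneg hA₀ hH
    set B : Matrix (Fin n) (Fin n) ℝ := -A₀⁻¹ with hBdef
    have hGBE : -(C * A₀⁻¹ * E) + F = C * B * E + F := hG trivial
    have hAB : (-A₀) * B = 1 := by
      rw [hBdef, neg_mul_neg, Matrix.mul_nonsing_inv _ hdet]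
    have hGnn : ∀ i j, 0 ≤ (C * B * E + F) i j := by
      intro i j
      rw [Matrix.add_apply]
      exact add_nonneg (mul_entry_nonneg (mul_entry_nonneg hC hBnn) hE i j) (hF i j)
    have hBEnn : ∀ k j, 0 ≤ (B * E) k j := mul_entry_nonneg hBnn hE
    have hcol : ∀ j, ∑ i, (C * B * E + F) i j < γ := by
      intro j
      have hkey : ∑ i, (C * B * E) i j ≤ (lam ᵥ* E) j := by
        have h1 : ∑ i, (C * B * E) i j
            = ∑ k, (((fun _ : Fin ny => (1:ℝ)) ᵥ* C) k) * (B * E) k j := by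
          have : ∑ k, (((fun _ : Fin ny => (1:ℝ)) ᵥ* C) k) * (B * E) k j
              = (((fun _ : Fin ny => (1:ℝ)) ᵥ* C) ᵥ* (B * E)) j := by
            simp [Matrix.vecMul, dotProduct]
          rw [this, Matrix.vecMul_vecMul, ← Matrix.mul_assoc, vecMul_one_apply]
        have h2' : ∀ k, ((fun _ : Fin ny => (1:ℝ)) ᵥ* C) k ≤ (lam ᵥ* (-A₀)) k := by
          intro k
          have := h2 k
          rw [Matrix.vecMul_neg]
          simp only [Pi.neg_apply]
          linarith
        have h3' : ∑ k, (((fun _ : Fin ny => (1:ℝ)) ᵥ* C) k) * (B * E) k j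
            ≤ ∑ k, ((lam ᵥ* (-A₀)) k) * (B * E) k j :=
          Finset.sum_le_sum fun k _ => mul_le_mul_of_nonneg_right (h2' k) (hBEnn k j)
        have h4 : ∑ k, ((lam ᵥ* (-A₀)) k) * (B * E) k j = (lam ᵥ* E) j := by
          have e1 : ∑ k, ((lam ᵥ* (-A₀)) k) * (B * E) k j
              = ((lam ᵥ* (-A₀)) ᵥ* (B * E)) j := by
            simp [Matrix.vecMul, dotProduct]
          rw [e1, Matrix.vecMul_vecMul, ← Matrix.mul_assoc, hAB, Matrix.one_mul]
        rw [h1]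
        rw [← h4]
        exact h3'
      have hsplit : ∑ i, (C * B * E + F) i j = ∑ i, (C * B * E) i j + ∑ i, F i j := by
        rw [← Finset.sum_add_distrib]
        exact Finset.sum_congr rfl fun i _ => by rw [Matrix.add_apply]
      have h5 := h3 j
      rw [vecMul_one_apply] at h5
      rw [hsplit]
      linarith
    rw [hGBE]
    rcases Nat.eq_zero_or_pos nu with hnu | hnu
    · subst hnu
      have : {s | ∃ j : Fin 0, s = ∑ i, |(C * B * E + F) i j|} = ∅ := by
        ext x
        simp only [Set.mem_setOf_eq, Set.mem_empty_iff_false, iff_false, not_exists]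
        exact fun j => j.elim0
      rw [norm1, this, Real.sSup_empty]
      exact hγ
    · haveI : NeZero nu := ⟨hnu.ne'⟩
      set S := {s | ∃ j : Fin nu, s = ∑ i, |(C * B * E + F) i j|} with hS
      have hSfin : S.Finite := by
        have : S = Set.range (fun j : Fin nu => ∑ i, |(C * B * E + F) i j|) := by
          ext x; simp [hS, eq_comm]
        rw [this]
        exact Set.finite_range _
      have hSne : S.Nonempty := ⟨∑ i, |(C * B * E + F) i (0 : Fin nu)|, ⟨0, rfl⟩⟩
      obtain ⟨j0, hj0⟩ := hSne.csSup_mem hSfin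
      rw [norm1, ← hS, hj0]
      calc ∑ i, |(C * B * E + F) i j0| = ∑ i, (C * B * E + F) i j0 :=
            Finset.sum_congr rfl fun i _ => abs_of_nonneg (hGnn i j0)
        _ < γ := hcol j0
end
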